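/- Let m = 2n, a = (a_{ij}) a real m×m matrix, and K_{ijkl} = (1/2)((a_{ij}+a_{ji})δ_{kl} − (m/2)(δ_{ik}a_{lj}+δ_{il}a_{kj}) − (m/2)(δ_{kj}a_{li}+δ_{lj}a_{ki})) − tr(a)δ_{kl}δ_{ij}/m + (δ_{ij}/2)(a_{lk}+a_{kl}). With Q_{ijkl} = (1/2)(δ_{ik}δ_{jl}+δ_{il}δ_{jk}), A_{ijkl} = (1/2)(J^k_i J^l_j + J^l_i J^k_j), and P_{ijkl} = δ_{ij}δ_{kl}, one has ⟨Q,K⟩ = ((2−m²−m)/2) tr(a), ⟨A,K⟩ = ((m+2)/2) tr(a), and ⟨P,K⟩ = 0, where ⟨·,·⟩ denotes full contraction over all four indices. -/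

import Mathlib

open scoped BigOperators

theorem sum_if_const' {α : Type*} [Fintype α] {c : Prop} [Decidable c] (f : α → ℝ) :
    ∑ x, (if c then f x else 0) = if c then ∑ x, f x else 0 := by
  split <;> simp

theorem sum_rot' {α : Type*} [Fintype α] (g : α → α → α → ℝ) :
    ∑ x, ∑ y, ∑ z, g x y z = ∑ y, ∑ z, ∑ x, g x y z := by
  rw [Finset.sum_comm]
  exact Finset.sum_congr rfl fun _ _ => Finset.sum_comm

set_option maxHeartbeats 4000000 in
/-- Let `m = 2n`, `a` a real `m×m` matrix, and `K_{ijkl}` as below (the coefficient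
tensor of `|z|^{m+2} 𝒦_euc(α₁/|z|^m)` for `α₁ = a_{ij} z^i dz^j`).  With
`Q_{ijkl} = (1/2)(δ_{ik}δ_{jl}+δ_{il}δ_{jk})`, `A_{ijkl} = (1/2)(J^k_i J^l_j + J^l_i J^k_j)`,
`P_{ijkl} = δ_{ij}δ_{kl}`, one has `⟨Q,K⟩ = ((2−m²−m)/2) tr(a)`,
`⟨A,K⟩ = ((m+2)/2) tr(a)`, and `⟨P,K⟩ = 0`, where `⟨·,·⟩` is full contraction. -/
theorem stmt_15 (n : ℕ) (J : Fin (2 * n) → Fin (2 * n) → ℝ)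
    (hJ2 : ∀ i j, ∑ k, J i k * J k j = -(if i = j then (1 : ℝ) else 0))
    (hJo : ∀ k l, ∑ p, J p k * J p l = (if k = l then (1 : ℝ) else 0))
    (hJa : ∀ i j, J i j = -J j i)
    (a : Fin (2 * n) → Fin (2 * n) → ℝ)
    (Q A P K : Fin (2 * n) → Fin (2 * n) → Fin (2 * n) → Fin (2 * n) → ℝ)
    (hQ : ∀ i j k l, Q i j k l = (1 / 2) *
      ((if i = k then (1 : ℝ) else 0) * (if j = l then 1 else 0)
        + (if i = l then (1 : ℝ) else 0) * (if j = k then 1 else 0)))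
    (hA : ∀ i j k l, A i j k l = (1 / 2) * (J i k * J j l + J j k * J i l))
    (hP : ∀ i j k l, P i j k l =
      (if i = j then (1 : ℝ) else 0) * (if k = l then 1 else 0))
    (hK : ∀ i j k l, K i j k l =
      (1 / 2) * ((a i j + a j i) * (if k = l then (1 : ℝ) else 0)
        - (2 * (n : ℝ) / 2) * ((if i = k then (1 : ℝ) else 0) * a l j
            + (if i = l then (1 : ℝ) else 0) * a k j)
        - (2 * (n : ℝ) / 2) * ((if k = j then (1 : ℝ) else 0) * a l i
            + (if l = j then (1 : ℝ) else 0) * a k i))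
      - (∑ t, a t t) * (if k = l then (1 : ℝ) else 0) * (if i = j then (1 : ℝ) else 0)
          / (2 * (n : ℝ))
      + ((if i = j then (1 : ℝ) else 0) / 2) * (a l k + a k l)) :
    (∑ i, ∑ j, ∑ k, ∑ l, Q i j k l * K i j k l
        = ((2 - (2 * (n : ℝ)) ^ 2 - 2 * (n : ℝ)) / 2) * ∑ t, a t t) ∧
    (∑ i, ∑ j, ∑ k, ∑ l, A i j k l * K i j k l
        = ((2 * (n : ℝ) + 2) / 2) * ∑ t, a t t) ∧
    (∑ i, ∑ j, ∑ k, ∑ l, P i j k l * K i j k l = 0) := by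
  rcases Nat.eq_zero_or_pos n with hn | hn
  · subst hn
    haveI : IsEmpty (Fin (2 * 0)) := ⟨fun x => absurd x.2 (by simp)⟩
    refine ⟨?_, ?_, ?_⟩ <;> simp [Finset.univ_eq_empty]
  have hnn : (n : ℝ) ≠ 0 := Nat.cast_ne_zero.mpr hn.ne'
  have h2n : (2 * (n : ℝ)) ≠ 0 := by positivity
  have Jdiag : ∀ i, J i i = 0 := fun i => by
    have := hJa i i; linarith
  have hrow : ∀ i j, ∑ k, J i k * J j k = (if i = j then (1 : ℝ) else 0) := fun i j => by
    rw [← hJo i j]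
    exact Finset.sum_congr rfl fun k _ => by rw [hJa i k, hJa j k]; ring
  have cS1 : ∀ (c : ℝ) (f : Fin (2 * n) → Fin (2 * n) → ℝ),
      (∑ x, ∑ x1, ∑ x2, c * (J x x2 * J x1 x2) * f x x1) = c * ∑ x, f x x := by
    intro c f
    have h : ∀ x x1 : Fin (2 * n), (∑ x2, c * (J x x2 * J x1 x2) * f x x1)
        = (if x = x1 then (1 : ℝ) else 0) * (c * f x x1) := fun x x1 => by
      rw [← hrow x x1, Finset.sum_mul]
      exact Finset.sum_congr rfl fun _ _ => by ring
    simp only [h, ite_mul, one_mul, zero_mul, Finset.sum_ite_eq, Finset.mem_univ, if_true,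
      ← Finset.mul_sum]
  have cS2 : ∀ (c : ℝ) (f : Fin (2 * n) → Fin (2 * n) → ℝ),
      (∑ x, ∑ x1, ∑ x2, c * (J x1 x2 * J x x2) * f x x1) = c * ∑ x, f x x := by
    intro c f
    have h : ∀ x x1 : Fin (2 * n), (∑ x2, c * (J x1 x2 * J x x2) * f x x1)
        = (if x = x1 then (1 : ℝ) else 0) * (c * f x x1) := fun x x1 => by
      rw [← hrow x x1, Finset.sum_mul]
      exact Finset.sum_congr rfl fun _ _ => by ring
    simp only [h, ite_mul, one_mul, zero_mul, Finset.sum_ite_eq, Finset.mem_univ, if_true,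
      ← Finset.mul_sum]
  have cS4 : ∀ (c : ℝ) (f : Fin (2 * n) → Fin (2 * n) → ℝ),
      (∑ x, ∑ x1, ∑ x2, c * (J x1 x * J x x2) * f x1 x2) = -(c * ∑ x, f x x) := by
    intro c f
    rw [sum_rot']
    have h : ∀ x1 x2 : Fin (2 * n), (∑ x, c * (J x1 x * J x x2) * f x1 x2)
        = -((if x1 = x2 then (1 : ℝ) else 0) * (c * f x1 x2)) := fun x1 x2 => by
      have e : (∑ x, c * (J x1 x * J x x2) * f x1 x2)
          = (∑ x, J x1 x * J x x2) * (c * f x1 x2) := by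
        rw [Finset.sum_mul]; exact Finset.sum_congr rfl fun _ _ => by ring
      rw [e, hJ2]; ring
    simp only [h, ite_mul, one_mul, zero_mul, neg_zero, Finset.sum_neg_distrib,
      Finset.sum_ite_eq, Finset.mem_univ, if_true, ← Finset.mul_sum]
  have cS5 : ∀ (c : ℝ) (f : Fin (2 * n) → Fin (2 * n) → ℝ),
      (∑ x, ∑ x1, ∑ x2, c * (J x x2 * J x1 x) * f x1 x2) = -(c * ∑ x, f x x) := by
    intro c f
    rw [sum_rot']
    have h : ∀ x1 x2 : Fin (2 * n), (∑ x, c * (J x x2 * J x1 x) * f x1 x2)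
        = -((if x1 = x2 then (1 : ℝ) else 0) * (c * f x1 x2)) := fun x1 x2 => by
      have e : (∑ x, c * (J x x2 * J x1 x) * f x1 x2)
          = (∑ x, J x1 x * J x x2) * (c * f x1 x2) := by
        rw [Finset.sum_mul]; exact Finset.sum_congr rfl fun _ _ => by ring
      rw [e, hJ2]; ring
    simp only [h, ite_mul, one_mul, zero_mul, neg_zero, Finset.sum_neg_distrib,
      Finset.sum_ite_eq, Finset.mem_univ, if_true, ← Finset.mul_sum]
  have cS6 : ∀ (c : ℝ) (f : Fin (2 * n) → Fin (2 * n) → ℝ),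
      (∑ x, ∑ x1, ∑ x2, c * (J x x1 * J x1 x2) * f x x2) = -(c * ∑ x, f x x) := by
    intro c f
    have swap : (∑ x, ∑ x1, ∑ x2, c * (J x x1 * J x1 x2) * f x x2)
        = ∑ x, ∑ x2, ∑ x1, c * (J x x1 * J x1 x2) * f x x2 :=
      Finset.sum_congr rfl fun _ _ => Finset.sum_comm
    rw [swap]
    have h : ∀ x x2 : Fin (2 * n), (∑ x1, c * (J x x1 * J x1 x2) * f x x2)
        = -((if x = x2 then (1 : ℝ) else 0) * (c * f x x2)) := fun x x2 => by
      have e : (∑ x1, c * (J x x1 * J x1 x2) * f x x2)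
          = (∑ x1, J x x1 * J x1 x2) * (c * f x x2) := by
        rw [Finset.sum_mul]; exact Finset.sum_congr rfl fun _ _ => by ring
      rw [e, hJ2]; ring
    simp only [h, ite_mul, one_mul, zero_mul, neg_zero, Finset.sum_neg_distrib,
      Finset.sum_ite_eq, Finset.mem_univ, if_true, ← Finset.mul_sum]
  have cS7 : ∀ (c : ℝ) (f : Fin (2 * n) → Fin (2 * n) → ℝ),
      (∑ x, ∑ x1, ∑ x2, c * (J x1 x2 * J x x1) * f x x2) = -(c * ∑ x, f x x) := by
    intro c f
    have swap : (∑ x, ∑ x1, ∑ x2, c * (J x1 x2 * J x x1) * f x x2)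
        = ∑ x, ∑ x2, ∑ x1, c * (J x1 x2 * J x x1) * f x x2 :=
      Finset.sum_congr rfl fun _ _ => Finset.sum_comm
    rw [swap]
    have h : ∀ x x2 : Fin (2 * n), (∑ x1, c * (J x1 x2 * J x x1) * f x x2)
        = -((if x = x2 then (1 : ℝ) else 0) * (c * f x x2)) := fun x x2 => by
      have e : (∑ x1, c * (J x1 x2 * J x x1) * f x x2)
          = (∑ x1, J x x1 * J x1 x2) * (c * f x x2) := by
        rw [Finset.sum_mul]; exact Finset.sum_congr rfl fun _ _ => by ring
      rw [e, hJ2]; ring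
    simp only [h, ite_mul, one_mul, zero_mul, neg_zero, Finset.sum_neg_distrib,
      Finset.sum_ite_eq, Finset.mem_univ, if_true, ← Finset.mul_sum]
  have cS8 : ∀ (c : ℝ) (f : Fin (2 * n) → ℝ),
      (∑ x, ∑ x1, ∑ x2 : Fin (2 * n), c * (J x x1 * J x x1) * f x2)
        = (2 * (n : ℝ)) * (c * ∑ x, f x) := by
    intro c f
    rw [sum_rot']
    have h : ∀ x1 x2 : Fin (2 * n), (∑ x, c * (J x x1 * J x x1) * f x2)
        = c * f x2 := fun x1 x2 => by
      have e : (∑ x, c * (J x x1 * J x x1) * f x2)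
          = (∑ x, J x x1 * J x x1) * (c * f x2) := by
        rw [Finset.sum_mul]; exact Finset.sum_congr rfl fun _ _ => by ring
      rw [e, hJo, if_pos rfl]; ring
    simp only [h, ← Finset.mul_sum, Finset.sum_const, Finset.card_univ, Fintype.card_fin,
      nsmul_eq_mul]
    push_cast
    ring
  have cS9 : ∀ (c : ℝ) (f : Fin (2 * n) → Fin (2 * n) → ℝ),
      (∑ x, ∑ x1, ∑ x2, c * (J x x1 * J x x2) * f x1 x2) = c * ∑ x, f x x := by
    intro c f
    rw [sum_rot']
    have h : ∀ x1 x2 : Fin (2 * n), (∑ x, c * (J x x1 * J x x2) * f x1 x2)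
        = (if x1 = x2 then (1 : ℝ) else 0) * (c * f x1 x2) := fun x1 x2 => by
      rw [← hJo x1 x2, Finset.sum_mul]
      exact Finset.sum_congr rfl fun _ _ => by ring
    simp only [h, ite_mul, one_mul, zero_mul, Finset.sum_ite_eq, Finset.mem_univ, if_true,
      ← Finset.mul_sum]
  refine ⟨?_, ?_, ?_⟩
  · -- Q part
    simp only [hK, hQ, if_true, reduceIte, mul_ite, ite_mul, ite_div, mul_one, one_mul, mul_zero,
      zero_mul, zero_div,
      mul_add, add_mul, mul_sub, sub_mul, zero_add, add_zero, zero_sub, sub_zero,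
      sum_if_const',
      Finset.sum_add_distrib, Finset.sum_sub_distrib, Finset.sum_ite_eq, Finset.sum_ite_eq',
      Finset.mem_univ, Finset.sum_const, Finset.card_univ, Fintype.card_fin, nsmul_eq_mul,
      Finset.mul_sum, Finset.sum_div]
    ring_nf
    simp only [← Finset.sum_mul, ← Finset.mul_sum, ← Finset.sum_div]
    push_cast
    field_simp
    simp only [Finset.sum_add_distrib, Finset.sum_sub_distrib, Finset.sum_neg_distrib,
      ← Finset.mul_sum, ← Finset.sum_mul]
    ring
  · -- A part
    simp only [hK, hA, if_true, reduceIte, mul_ite, ite_mul, ite_div, mul_one, one_mul, mul_zero,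
      zero_mul, zero_div,
      mul_add, add_mul, mul_sub, sub_mul, zero_add, add_zero, zero_sub, sub_zero,
      sum_if_const',
      Finset.sum_add_distrib, Finset.sum_sub_distrib, Finset.sum_ite_eq, Finset.sum_ite_eq',
      Finset.mem_univ, Finset.sum_const, Finset.card_univ, Fintype.card_fin, nsmul_eq_mul,
      Finset.mul_sum, Finset.sum_div]
    simp only [Jdiag, zero_mul, mul_zero, Finset.sum_const_zero, add_zero, zero_add,
      sub_zero, zero_sub]
    simp only [cS1, cS2, cS4, cS5, cS6, cS7, cS8, cS9]
    simp only [← Finset.sum_mul, ← Finset.mul_sum, ← Finset.sum_div]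
    field_simp
    ring
  · -- P part
    simp only [hK, hP, if_true, reduceIte, mul_ite, ite_mul, ite_div, mul_one, one_mul, mul_zero,
      zero_mul, zero_div,
      mul_add, add_mul, mul_sub, sub_mul, zero_add, add_zero, zero_sub, sub_zero,
      sum_if_const',
      Finset.sum_add_distrib, Finset.sum_sub_distrib, Finset.sum_ite_eq, Finset.sum_ite_eq',
      Finset.mem_univ, Finset.sum_const, Finset.card_univ, Fintype.card_fin, nsmul_eq_mul,
      Finset.mul_sum, Finset.sum_div]
    ring_nf
    simp only [← Finset.sum_mul, ← Finset.mul_sum, ← Finset.sum_div]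
    push_cast
    field_simp
    ring
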